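/- arXiv:2411.09321 — 3 statements merged into one kernel-verified Lean document; each statement's English description precedes it below -/
import Mathlib

section
/- For every integer k ≥ 2, the diagonal Ramsey number satisfies r(k) ≥ 2^{k/2}; equivalently, for every positive integer N with N < 2^{k/2} there exists a two-coloring of the edges of K_N containing no monochromatic K_k. -/
/-! Erdős' counting argument: a uniformly random coloring makes a fixed `k`-set monochromatic
with probability `2 ^ (1 - C(k,2))`, so when `C(N,k) * 2 < 2 ^ C(k,2)`, which holds as soon as
`N < 2 ^ (k/2)` and `k ≥ 2`, some coloring of `K_N` has no monochromatic `K_k`. Since `r(k)` is an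
infimum, the lower bound on it also needs the set it is taken over to be nonempty, i.e. the
finite Ramsey theorem `r(k) ≤ C(2k,k)`. -/

-- A two-coloring of `E(K_N)` is a symmetric `c : Fin N → Fin N → Bool`; its diagonal is ignored.
def HasMonoClique (N k : ℕ) (c : Fin N → Fin N → Bool) : Prop :=
  ∃ (S : Finset (Fin N)) (b : Bool), S.card = k ∧
    ∀ v ∈ S, ∀ w ∈ S, v ≠ w → c v w = b

noncomputable def ramsey (k : ℕ) : ℕ :=
  sInf {N | ∀ c : Fin N → Fin N → Bool, (∀ v w, c v w = c w v) → HasMonoClique N k c}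

open Finset Fintype
open scoped Nat

theorem card_filter_forall_mem_eq_mul_pow {α β : Type*} [Fintype α] [DecidableEq α] [Fintype β]
    [DecidableEq β] (T : Finset α) (b : β) :
    #{f : α → β | ∀ a ∈ T, f a = b} * card β ^ #T = card β ^ card α := by
  have hpi : ({f : α → β | ∀ a ∈ T, f a = b} : Finset _) =
      piFinset fun a => if a ∈ T then {b} else univ := by
    ext f
    simp only [mem_filter, mem_univ, true_and, mem_piFinset]
    refine forall_congr' fun a => ?_
    split_ifs with ha <;> simp [ha]
  rw [hpi, card_piFinset, ← card_compl_add_card T, pow_add]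
  simp only [apply_ite card, card_singleton, card_univ]
  rw [prod_ite, prod_const_one, one_mul, prod_const, filter_not, filter_mem_eq_inter, univ_inter,
    ← compl_eq_univ_sdiff]

-- Erdős' Property B bound, for any number of colors.
theorem exists_forall_not_forall_eq_of_card_mul_lt {ι α β : Type*} [Fintype α] [DecidableEq α]
    [Fintype β] [DecidableEq β] [Nonempty β] (s : Finset ι) (T : ι → Finset α) {m : ℕ}
    (hT : ∀ i ∈ s, #(T i) = m) (hs : #s * card β < card β ^ m) :
    ∃ f : α → β, ∀ i ∈ s, ∀ b, ¬ ∀ a ∈ T i, f a = b := by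
  set bad := (s ×ˢ univ).biUnion fun p : ι × β => {f : α → β | ∀ a ∈ T p.1, f a = p.2}
  have hbad : #bad * card β ^ m < card β ^ card α * card β ^ m :=
    calc #bad * card β ^ m
        ≤ (∑ p ∈ s ×ˢ univ, #{f : α → β | ∀ a ∈ T p.1, f a = p.2}) * card β ^ m := by
          gcongr; exact card_biUnion_le
      _ = ∑ p ∈ s ×ˢ (univ : Finset β), card β ^ card α := by
          rw [sum_mul]
          refine sum_congr rfl fun p hp => ?_
          rw [← hT p.1 (mem_product.1 hp).1, card_filter_forall_mem_eq_mul_pow]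
      _ = #s * card β * card β ^ card α := by
          rw [sum_const, card_product, card_univ, smul_eq_mul]
      _ < card β ^ m * card β ^ card α := by gcongr
      _ = card β ^ card α * card β ^ m := mul_comm _ _
  obtain ⟨f, -, hf⟩ := exists_mem_notMem_of_card_lt_card (s := bad) (t := univ)
    (by rw [card_univ, card_fun]; exact lt_of_mul_lt_mul_right' hbad)
  exact ⟨f, fun i hi b hb =>
    hf (mem_biUnion.2 ⟨(i, b), mem_product.2 ⟨hi, mem_univ b⟩, mem_filter.2 ⟨mem_univ f, hb⟩⟩)⟩

theorem SimpleGraph.exists_isNClique_or_exists_isNClique_compl {α : Type*} [DecidableEq α]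
    (G : SimpleGraph α) [DecidableRel G.Adj] :
    ∀ (s t : ℕ) (A : Finset α), (s + t).choose s ≤ #A →
      (∃ S ⊆ A, G.IsNClique s S) ∨ ∃ S ⊆ A, Gᶜ.IsNClique t S
  | 0, _, _, _ => Or.inl ⟨∅, empty_subset _, isNClique_empty.2 rfl⟩
  | _ + 1, 0, _, _ => Or.inr ⟨∅, empty_subset _, isNClique_empty.2 rfl⟩
  | s + 1, t + 1, A, hA => by
    obtain ⟨v, hv⟩ : A.Nonempty := card_pos.1 (lt_of_lt_of_le (Nat.choose_pos (by omega)) hA)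
    set B := (A.erase v).filter (G.Adj v)
    set C := (A.erase v).filter (fun w => ¬ G.Adj v w)
    have hBC : #B + #C + 1 = #A := by
      rw [card_filter_add_card_filter_not, card_erase_add_one hv]
    have hBA : B ⊆ A := (filter_subset _ _).trans (erase_subset v A)
    have hCA : C ⊆ A := (filter_subset _ _).trans (erase_subset v A)
    have hpascal : (s + 1 + (t + 1)).choose (s + 1)
        = (s + (t + 1)).choose s + (s + 1 + t).choose (s + 1) := by
      rw [show s + 1 + (t + 1) = s + (t + 1) + 1 by omega, Nat.choose_succ_succ,
        show s + (t + 1) = s + 1 + t by omega]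
    -- By Pascal's rule, `v` has enough neighbours in `A` or enough non-neighbours.
    by_cases hB : (s + (t + 1)).choose s ≤ #B
    · rcases exists_isNClique_or_exists_isNClique_compl G s (t + 1) B hB with
        ⟨S, hSB, hS⟩ | ⟨S, hSB, hS⟩
      · exact Or.inl ⟨insert v S, insert_subset hv (hSB.trans hBA),
          hS.insert fun w hw => (mem_filter.1 (hSB hw)).2⟩
      · exact Or.inr ⟨S, hSB.trans hBA, hS⟩
    · rcases exists_isNClique_or_exists_isNClique_compl G (s + 1) t C (by omega) with
        ⟨S, hSC, hS⟩ | ⟨S, hSC, hS⟩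
      · exact Or.inl ⟨S, hSC.trans hCA, hS⟩
      · refine Or.inr ⟨insert v S, insert_subset hv (hSC.trans hCA), hS.insert fun w hw => ?_⟩
        obtain ⟨hwv, hvw⟩ := mem_filter.1 (hSC hw)
        exact (G.compl_adj v w).2 ⟨(ne_of_mem_erase hwv).symm, hvw⟩
termination_by s t => s + t

theorem four_mul_two_pow_le_factorial_sq {k : ℕ} (hk : 3 ≤ k) : 4 * 2 ^ k ≤ k ! ^ 2 := by
  induction k, hk using Nat.le_induction with
  | base => decide
  | succ k hk ih =>
    have h2 : 2 ≤ (k + 1) ^ 2 := by nlinarith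
    rw [Nat.factorial_succ, mul_pow, pow_succ]
    nlinarith [Nat.mul_le_mul_right (k ! ^ 2) h2]

theorem choose_mul_two_lt_two_pow_choose_two {N k : ℕ} (hk : 2 ≤ k) (hN : N ^ 2 < 2 ^ k) :
    N.choose k * 2 < 2 ^ k.choose 2 := by
  obtain rfl | hk3 : k = 2 ∨ 3 ≤ k := by omega
  · rw [Nat.choose_eq_zero_of_lt (by nlinarith)]
    norm_num
  have hsquare : k * k = k.choose 2 * 2 + k := by
    rw [Nat.choose_succ_right_eq, Nat.choose_one_right, ← Nat.mul_succ, Nat.succ_eq_add_one,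
      Nat.sub_add_cancel (by omega : 1 ≤ k)]
  refine lt_of_pow_lt_pow_left₀ 2 (Nat.zero_le _) (Nat.lt_of_mul_lt_mul_right (a := 2 ^ k) ?_)
  calc (N.choose k * 2) ^ 2 * 2 ^ k
      = N.choose k ^ 2 * (4 * 2 ^ k) := by ring
    _ ≤ N.choose k ^ 2 * k ! ^ 2 := by gcongr; exact four_mul_two_pow_le_factorial_sq hk3
    _ = (N.descFactorial k) ^ 2 := by rw [Nat.descFactorial_eq_factorial_mul_choose]; ring
    _ ≤ (N ^ k) ^ 2 := by gcongr; exact Nat.descFactorial_le_pow N k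
    _ = (N ^ 2) ^ k := by ring
    _ < (2 ^ k) ^ k := by gcongr
    _ = (2 ^ k.choose 2) ^ 2 * 2 ^ k := by rw [← pow_mul, hsquare]; ring

theorem hasMonoClique_of_choose_le {N k : ℕ} (hN : (k + k).choose k ≤ N)
    (c : Fin N → Fin N → Bool) (hc : ∀ v w, c v w = c w v) : HasMonoClique N k c := by
  classical
  let G := SimpleGraph.fromRel fun v w => c v w = true
  have hG : ∀ v w, G.Adj v w ↔ v ≠ w ∧ c v w = true := fun v w => by
    simp [G, hc w v]
  rcases G.exists_isNClique_or_exists_isNClique_compl k k univ (by simpa using hN) with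
    ⟨S, -, hS⟩ | ⟨S, -, hS⟩
  · exact ⟨S, true, hS.card_eq, fun v hv w hw hvw => ((hG v w).1 (hS.isClique hv hw hvw)).2⟩
  · refine ⟨S, false, hS.card_eq, fun v hv w hw hvw => ?_⟩
    simpa [hG, hvw] using hS.isClique hv hw hvw

theorem exists_symm_not_hasMonoClique {N k : ℕ} (hk : 2 ≤ k) (hN : N ^ 2 < 2 ^ k) :
    ∃ c : Fin N → Fin N → Bool, (∀ v w, c v w = c w v) ∧ ¬ HasMonoClique N k c := by
  obtain ⟨c, hc⟩ := exists_forall_not_forall_eq_of_card_mul_lt (β := Bool)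
    (powersetCard k (univ : Finset (Fin N))) (powersetCard 2) (m := k.choose 2)
    (fun S hS => by rw [card_powersetCard, (mem_powersetCard.1 hS).2])
    (by simpa [card_powersetCard] using choose_mul_two_lt_two_pow_choose_two hk hN)
  refine ⟨fun v w => c {v, w}, fun v w => congrArg c (pair_comm v w), ?_⟩
  rintro ⟨S, b, hSk, hS⟩
  refine hc S (mem_powersetCard.2 ⟨subset_univ S, hSk⟩) b fun e he => ?_
  obtain ⟨heS, he2⟩ := mem_powersetCard.1 he
  obtain ⟨v, w, hvw, rfl⟩ := card_eq_two.1 he2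
  exact hS v (heS (mem_insert_self v _)) w (heS (mem_insert_of_mem (mem_singleton_self w))) hvw

theorem natCast_sq_lt_two_pow_of_lt_rpow {N k : ℕ} (h : (N : ℝ) < 2 ^ ((k : ℝ) / 2)) :
    N ^ 2 < 2 ^ k := by
  have hsq : ((2 : ℝ) ^ ((k : ℝ) / 2)) ^ 2 = 2 ^ k := by
    rw [← Real.rpow_mul_natCast zero_le_two, ← Real.rpow_natCast]
    norm_num
  exact_mod_cast hsq ▸ pow_lt_pow_left₀ h (Nat.cast_nonneg N) two_ne_zero

/-- **Erdős' exponential lower bound.** For every `k ≥ 2`, `r(k) ≥ 2^(k/2)`;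
equivalently, for every positive `N < 2^(k/2)` there is a two-coloring of the edges
of `K_N` with no monochromatic `K_k`. -/
theorem ramsey_lower_bound (k : ℕ) (hk : 2 ≤ k) :
    ((2 : ℝ) ^ ((k : ℝ) / 2) ≤ (ramsey k : ℝ)) ∧
      ∀ N : ℕ, 0 < N → (N : ℝ) < (2 : ℝ) ^ ((k : ℝ) / 2) →
        ∃ c : Fin N → Fin N → Bool, (∀ v w, c v w = c w v) ∧ ¬ HasMonoClique N k c := by
  have hcoloring : ∀ N : ℕ, (N : ℝ) < 2 ^ ((k : ℝ) / 2) →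
      ∃ c : Fin N → Fin N → Bool, (∀ v w, c v w = c w v) ∧ ¬ HasMonoClique N k c :=
    fun N hN => exists_symm_not_hasMonoClique hk (natCast_sq_lt_two_pow_of_lt_rpow hN)
  refine ⟨?_, fun N _ => hcoloring N⟩
  have hramsey : ramsey k ∈
      {N | ∀ c : Fin N → Fin N → Bool, (∀ v w, c v w = c w v) → HasMonoClique N k c} :=
    Nat.sInf_mem ⟨(k + k).choose k, hasMonoClique_of_choose_le le_rfl⟩
  by_contra! hlt
  obtain ⟨c, hc, hno⟩ := hcoloring _ hlt
  exact hno (hramsey c hc)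
end

section
/- Let X be a finite nonempty set, n a natural number, and σ : X → ℝⁿ an arbitrary function. Then there exists a real number κ ≥ 0 such that the number of ordered pairs (v,w) ∈ X × X with ⟨σ(v), σ(w)⟩ ≥ κ² - 1 is at least |X|²/(κ² + 2)². -/
/-! Put `f(v,w) = ⟪σ v, σ w⟫`; its sum over `X × X` is `‖∑ σ v‖² ≥ 0`. If fewer than
`|X|²/(t+2)²` pairs had `f ≥ t - 1` for every `t ≥ 0`, then testing the dyadic thresholds
`t + 2 = 2^(j+1)` in a discrete layer-cake bound `x ≤ ∑ⱼ 2^(j+1) · [2^(j+1) ≤ x + 2]` for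
`x = f + 1` would give `∑ (f + 1) < |X|² ∑ⱼ 2^-(j+1) ≤ |X|²`, contradicting `∑ (f + 1) ≥ |X|²`. -/

open Finset
open scoped RealInnerProductSpace

lemma min_le_sum_dyadic_layers (m : ℕ) (x : ℝ) :
    min x (2 ^ (m + 1) - 2) ≤
      ∑ j ∈ range m, if (2 : ℝ) ^ (j + 1) ≤ x + 2 then (2 : ℝ) ^ (j + 1) else 0 := by
  induction m with
  | zero => simp
  | succ m ih =>
    rw [sum_range_succ]
    split_ifs with hx
    · have : min x (2 ^ (m + 1) - 2) = 2 ^ (m + 1) - 2 := min_eq_right (by linarith)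
      have : min x (2 ^ (m + 1 + 1) - 2) ≤ 2 ^ (m + 1 + 1) - 2 := min_le_right _ _
      rw [pow_succ _ (m + 1)] at this ⊢
      linarith
    · have : min x (2 ^ (m + 1) - 2) = x := min_eq_left (by linarith)
      have : min x (2 ^ (m + 1 + 1) - 2) ≤ x := min_le_left _ _
      linarith

lemma sum_le_sum_dyadic_level_card {α : Type*} [Fintype α] (g : α → ℝ) (m : ℕ)
    (hg : ∀ a, g a ≤ 2 ^ (m + 1) - 2) :
    ∑ a, g a ≤ ∑ j ∈ range m, (2 : ℝ) ^ (j + 1) * #{a | (2 : ℝ) ^ (j + 1) ≤ g a + 2} := by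
  calc ∑ a, g a
      ≤ ∑ a, ∑ j ∈ range m, if (2 : ℝ) ^ (j + 1) ≤ g a + 2 then (2 : ℝ) ^ (j + 1) else 0 :=
        sum_le_sum fun a _ => (le_min le_rfl (hg a)).trans (min_le_sum_dyadic_layers m (g a))
    _ = _ := by
        rw [sum_comm]
        refine sum_congr rfl fun j _ => ?_
        rw [sum_ite, sum_const, sum_const_zero, nsmul_eq_mul, mul_comm]
        simp

lemma sum_half_pow_succ_le_one (m : ℕ) : ∑ j ∈ range m, (1 / 2 : ℝ) ^ (j + 1) ≤ 1 := by
  have := sum_geometric_two_le m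
  simp only [pow_succ, ← sum_mul] at this ⊢
  linarith

theorem exists_card_le_of_sum_nonneg {α : Type*} [Fintype α] (f : α → ℝ)
    (hf : 0 ≤ ∑ a, f a) :
    ∃ t : ℝ, 0 ≤ t ∧ (Fintype.card α : ℝ) / (t + 2) ^ 2 ≤ #{a | t - 1 ≤ f a} := by
  by_contra! hfew
  set N : ℝ := (Fintype.card α : ℝ)
  obtain ⟨C, hC⟩ := Finite.exists_le f
  obtain ⟨m, hm⟩ := pow_unbounded_of_one_lt (C + 3) (one_lt_two : (1 : ℝ) < 2)
  have hbound : ∀ a, f a + 1 ≤ 2 ^ (m + 1 + 1) - 2 := fun a => by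
    have : (2 : ℝ) ^ m ≤ 2 ^ (m + 1 + 1) := pow_le_pow_right₀ one_le_two (by omega)
    linarith [hC a]
  have hlevel : ∀ j : ℕ, (2 : ℝ) ^ (j + 1) * #{a | (2 : ℝ) ^ (j + 1) ≤ f a + 1 + 2}
      < N * (1 / 2) ^ (j + 1) := fun j => by
    have h2 : (2 : ℝ) ≤ 2 ^ (j + 1) := le_self_pow₀ one_le_two j.succ_ne_zero
    have hj := hfew (2 ^ (j + 1) - 2) (by linarith)
    simp only [sub_add_cancel, sub_le_iff_le_add] at hj
    calc (2 : ℝ) ^ (j + 1) * #{a | (2 : ℝ) ^ (j + 1) ≤ f a + 1 + 2}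
        < 2 ^ (j + 1) * (N / (2 ^ (j + 1)) ^ 2) := by gcongr
      _ = N * (1 / 2) ^ (j + 1) := by rw [div_pow, one_pow]; field_simp
  have hsum : N ≤ ∑ a, (f a + 1) := by
    simp only [sum_add_distrib, sum_const, card_univ, nsmul_eq_mul, mul_one]
    linarith
  refine lt_irrefl N ?_
  calc N ≤ ∑ a, (f a + 1) := hsum
    _ ≤ ∑ j ∈ range (m + 1), (2 : ℝ) ^ (j + 1) * #{a | (2 : ℝ) ^ (j + 1) ≤ f a + 1 + 2} :=
      sum_le_sum_dyadic_level_card (fun a => f a + 1) (m + 1) hbound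
    _ < ∑ j ∈ range (m + 1), N * (1 / 2) ^ (j + 1) :=
      sum_lt_sum_of_nonempty nonempty_range_add_one fun j _ => hlevel j
    _ ≤ N := by
      rw [← mul_sum]
      exact mul_le_of_le_one_right (Nat.cast_nonneg _) (sum_half_pow_succ_le_one _)

lemma sum_inner_prod_nonneg {ι E : Type*} [Fintype ι] [NormedAddCommGroup E]
    [InnerProductSpace ℝ E] (v : ι → E) : 0 ≤ ∑ p : ι × ι, ⟪v p.1, v p.2⟫ := by
  have : ∑ p : ι × ι, ⟪v p.1, v p.2⟫ = ⟪∑ i, v i, ∑ i, v i⟫ := by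
    simp only [Fintype.sum_prod_type, sum_inner, inner_sum]
    exact sum_comm
  exact this ▸ real_inner_self_nonneg

theorem one_color_geometric_lemma_general {X : Type*} [Fintype X] (n : ℕ)
    (σ : X → EuclideanSpace ℝ (Fin n)) :
    ∃ κ : ℝ, 0 ≤ κ ∧
      (Fintype.card X : ℝ) ^ 2 / (κ ^ 2 + 2) ^ 2 ≤
        (Nat.card {p : X × X // κ ^ 2 - 1 ≤ ⟪σ p.1, σ p.2⟫} : ℝ) := by
  obtain ⟨t, ht, hcard⟩ := exists_card_le_of_sum_nonneg _ (sum_inner_prod_nonneg σ)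
  refine ⟨√t, Real.sqrt_nonneg t, ?_⟩
  rw [Real.sq_sqrt ht, Nat.card_eq_fintype_card, Fintype.card_subtype]
  simpa [Fintype.card_prod, sq] using hcard

/-- **One-color geometric lemma.** For an arbitrary function `σ : X → ℝⁿ` on a finite
nonempty set `X`, there is `κ ≥ 0` such that the number of ordered pairs `(v,w) ∈ X × X`
with `⟪σ(v), σ(w)⟫ ≥ κ² - 1` is at least `|X|² / (κ² + 2)²`. -/
theorem one_color_geometric_lemma {X : Type*} [Fintype X] [Nonempty X] (n : ℕ)
    (σ : X → EuclideanSpace ℝ (Fin n)) :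
    ∃ κ : ℝ, 0 ≤ κ ∧
      (Fintype.card X : ℝ) ^ 2 / (κ ^ 2 + 2) ^ 2 ≤
        (Nat.card {p : X × X // κ ^ 2 - 1 ≤ ⟪σ p.1, σ p.2⟫} : ℝ) :=
  one_color_geometric_lemma_general n σ
end

section
/- For all real x ∈ [0,1], the inequality (x + x²/4) + (2-x)·H(1/(2-x)) ≤ 2 - x²/10 holds, where H is the binary entropy function. -/
/-!
Since `(2 - x) · H(1/(2 - x)) = ((2 - x) ln (2 - x) - (1 - x) ln (1 - x)) / ln 2`, the inequality
says that `g(x) = (2 - x - 7x²/20) ln 2 - (2 - x) ln (2 - x) + (1 - x) ln (1 - x)` is nonnegative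
on `[0, 1]`. As `g(0) = 0`, it suffices that `g` is nondecreasing, and
`g'(x) = ln ((2 - x) / (2(1 - x))) - (7x/10) ln 2 ≥ x/(2 - x) - (7x/10) ln 2 ≥ 0`
because `ln t ≥ 1 - 1/t` and `ln 2 < 5/7`.
-/

/-- The binary entropy function `H(z) = -z log₂ z - (1-z) log₂ (1-z)`, with the
convention (automatic from `Real.logb`) that `H(0) = H(1) = 0`. -/
noncomputable def binaryEntropy (z : ℝ) : ℝ :=
  -z * Real.logb 2 z - (1 - z) * Real.logb 2 (1 - z)

open Real

lemma mul_binaryEntropy_inv {a : ℝ} (ha : a ≠ 0) :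
    a * binaryEntropy a⁻¹ = a * logb 2 a - (a - 1) * logb 2 (a - 1) := by
  rcases eq_or_ne a 1 with rfl | ha1
  · simp [binaryEntropy]
  · have hcompl : 1 - a⁻¹ = (a - 1) / a := by field_simp
    rw [binaryEntropy, hcompl, logb_inv, logb_div (sub_ne_zero.2 ha1) ha]
    field_simp
    ring

lemma div_two_le_log_div {y : ℝ} (h0 : 0 ≤ y) (h1 : y < 1) :
    y / 2 ≤ log ((2 - y) / (2 * (1 - y))) := by
  have h2y : 0 < 2 - y := by linarith
  have h1y : 0 < 1 - y := by linarith
  calc y / 2 ≤ y / (2 - y) := div_le_div_of_nonneg_left h0 h2y (by linarith)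
    _ = 1 - ((2 - y) / (2 * (1 - y)))⁻¹ := by field_simp; ring
    _ ≤ _ := one_sub_inv_le_log_of_pos (by positivity)

/-- `ln 2` times the slack of `entropy_inequality`. -/
noncomputable def entropyGap (x : ℝ) : ℝ :=
  (2 - x - 7 * x ^ 2 / 20) * log 2 - (2 - x) * log (2 - x) + (1 - x) * log (1 - x)

lemma continuous_entropyGap : Continuous entropyGap := by
  have hmulLog (c : ℝ) : Continuous fun y : ℝ => (c - y) * log (c - y) :=
    continuous_mul_log.comp (continuous_const.sub continuous_id)
  unfold entropyGap
  exact ((by fun_prop : Continuous fun y : ℝ => (2 - y - 7 * y ^ 2 / 20) * log 2).sub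
    (hmulLog 2)).add (hmulLog 1)

lemma hasDerivAt_entropyGap {x : ℝ} (hx : x < 1) :
    HasDerivAt entropyGap (log (2 - x) - log (1 - x) - (1 + 7 * x / 10) * log 2) x := by
  have hpoly : HasDerivAt (fun y : ℝ => 2 - y - 7 * y ^ 2 / 20) (-1 - 7 * x / 10) x := by
    refine (((hasDerivAt_id x).const_sub 2).sub
      (((hasDerivAt_pow 2 x).const_mul 7).div_const 20)).congr_deriv ?_
    norm_num
    ring
  have h2 := (hasDerivAt_mul_log (by linarith : 2 - x ≠ 0)).comp x ((hasDerivAt_id x).const_sub 2)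
  have h1 := (hasDerivAt_mul_log (by linarith : 1 - x ≠ 0)).comp x ((hasDerivAt_id x).const_sub 1)
  exact (((hpoly.mul_const (log 2)).sub h2).add h1).congr_deriv (by ring)

lemma deriv_entropyGap_nonneg {y : ℝ} (h0 : 0 ≤ y) (h1 : y < 1) :
    0 ≤ log (2 - y) - log (1 - y) - (1 + 7 * y / 10) * log 2 := by
  have hlog : log ((2 - y) / (2 * (1 - y))) = log (2 - y) - log 2 - log (1 - y) := by
    rw [log_div (by linarith) (by linarith), log_mul two_ne_zero (by linarith)]
    ring
  have hbound := div_two_le_log_div h0 h1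
  nlinarith [log_two_lt_d9]

lemma entropyGap_nonneg {x : ℝ} (hx : x ∈ Set.Icc (0 : ℝ) 1) : 0 ≤ entropyGap x := by
  have hmono : MonotoneOn entropyGap (Set.Icc 0 1) := by
    refine monotoneOn_of_hasDerivWithinAt_nonneg (convex_Icc 0 1)
      (f' := fun y => log (2 - y) - log (1 - y) - (1 + 7 * y / 10) * log 2)
      continuous_entropyGap.continuousOn (fun y hy => ?_) (fun y hy => ?_)
    all_goals rw [interior_Icc] at hy
    · exact (hasDerivAt_entropyGap hy.2).hasDerivWithinAt
    · exact deriv_entropyGap_nonneg hy.1.le hy.2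
  simpa [entropyGap] using hmono ⟨le_rfl, zero_le_one⟩ hx hx.1

/-- For all `x ∈ [0,1]`, `(x + x²/4) + (2-x)·H(1/(2-x)) ≤ 2 - x²/10`. -/
theorem entropy_inequality (x : ℝ) (hx : x ∈ Set.Icc (0 : ℝ) 1) :
    (x + x ^ 2 / 4) + (2 - x) * binaryEntropy (1 / (2 - x)) ≤ 2 - x ^ 2 / 10 := by
  rw [one_div, mul_binaryEntropy_inv (by linarith [hx.2]), show 2 - x - 1 = 1 - x by ring]
  have hslack : 2 - x ^ 2 / 10
      - (x + x ^ 2 / 4 + ((2 - x) * logb 2 (2 - x) - (1 - x) * logb 2 (1 - x)))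
      = entropyGap x / log 2 := by
    simp only [entropyGap, logb]
    field_simp
    ring
  linarith [div_nonneg (entropyGap_nonneg hx) (log_pos one_lt_two).le]
end
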